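/- Every eigenvalue λ of a real m×m matrix B satisfies |λ − trace(B)/m| ≤ √(((m−1)/m) · (trace(B^T B) − trace(B)²/m)). -/

import Mathlib

open Matrix BigOperators

noncomputable def lamMax {k : Type*} [Fintype k] [DecidableEq k] (B : Matrix k k ℝ) : ℝ :=
  sSup (spectrum ℝ B)

noncomputable def specNorm {n m : ℕ} (B : Matrix (Fin n) (Fin m) ℝ) : ℝ :=
  Real.sqrt (lamMax (Bᵀ * B))

noncomputable def sigMin {n m : ℕ} (B : Matrix (Fin n) (Fin m) ℝ) : ℝ :=
  Real.sqrt (sInf (spectrum ℝ (Bᵀ * B)))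

-- auxiliary: trace is invariant under unitary conjugation pairs
lemma aux_key {m : ℕ} (U : Matrix (Fin m) (Fin m) ℂ) (hUU : U * Uᴴ = 1)
    (P Q : Matrix (Fin m) (Fin m) ℂ) :
    ((Uᴴ * P * U) * (Uᴴ * Q * U)).trace = (P * Q).trace := by
  have h : (Uᴴ * P * U) * (Uᴴ * Q * U) = Uᴴ * (P * Q) * U := by
    calc (Uᴴ * P * U) * (Uᴴ * Q * U) = Uᴴ * P * ((U * Uᴴ) * (Q * U)) := by
          simp only [Matrix.mul_assoc]
      _ = Uᴴ * (P * Q) * U := by rw [hUU, Matrix.one_mul]; simp only [Matrix.mul_assoc]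
  rw [h, Matrix.trace_mul_cycle, hUU, Matrix.one_mul]

set_option maxHeartbeats 1000000 in
theorem stmt_5 {m : ℕ} (B : Matrix (Fin m) (Fin m) ℝ) (lam : ℂ)
    (hlam : lam ∈ spectrum ℂ (B.map Complex.ofReal)) :
    ‖lam - (B.trace : ℂ) / (m : ℂ)‖ ≤
      Real.sqrt (((m - 1 : ℝ) / m) * ((Bᵀ * B).trace - B.trace ^ 2 / m)) := by
  rcases Nat.eq_zero_or_pos m with hm | hm
  · subst hm
    haveI : Subsingleton (Matrix (Fin 0) (Fin 0) ℂ) :=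
      ⟨fun a b => by ext i j; exact i.elim0⟩
    exact absurd (isUnit_of_subsingleton _) (spectrum.mem_iff.mp hlam)
  haveI : NeZero m := ⟨hm.ne'⟩
  have hmR : (0 : ℝ) < m := by exact_mod_cast hm
  set A : Matrix (Fin m) (Fin m) ℂ := B.map Complex.ofReal with hA
  set t : ℝ := B.trace / m with ht
  set μ : ℂ := lam - (t : ℝ) with hμdef
  set A' : Matrix (Fin m) (Fin m) ℂ := A - (t : ℂ) • 1 with hA'
  -- eigenvector
  rw [← AlgEquiv.spectrum_eq (Matrix.toLinAlgEquiv' : Matrix (Fin m) (Fin m) ℂ ≃ₐ[ℂ] _),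
    ← Module.End.hasEigenvalue_iff_mem_spectrum] at hlam
  obtain ⟨v, hv⟩ := hlam.exists_hasEigenvector
  have hveq : A.mulVec v = lam • v := by
    have := hv.apply_eq_smul
    simpa [Matrix.toLinAlgEquiv'_apply, Matrix.toLin'_apply] using this
  -- normalized eigenvector in EuclideanSpace
  set E := EuclideanSpace ℂ (Fin m)
  set ve : E := WithLp.toLp 2 v with hve
  have hvne : ve ≠ 0 := fun h => hv.2 (by simpa [hve] using congrArg WithLp.ofLp h)
  set c : ℂ := ((‖ve‖ : ℝ) : ℂ)⁻¹ with hc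
  set u : E := c • ve with hu
  have hnorm : ‖u‖ = 1 := by
    rw [hu, norm_smul, hc, norm_inv, Complex.norm_real, Real.norm_eq_abs,
      abs_of_nonneg (norm_nonneg _), inv_mul_cancel₀ (norm_ne_zero_iff.mpr hvne)]
  have hinner : (inner ℂ u u : ℂ) = 1 := by
    rw [inner_self_eq_norm_sq_to_K, hnorm]; norm_num
  have hueig : A'.mulVec u = μ • u := by
    have h1 : A.mulVec u = lam • u := by
      show A.mulVec (c • v) = lam • (c • v)
      rw [Matrix.mulVec_smul, hveq, smul_comm]
    have h2 : ((t : ℂ) • (1 : Matrix (Fin m) (Fin m) ℂ)).mulVec u = (t : ℂ) • u := by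
      rw [Matrix.smul_mulVec, Matrix.one_mulVec]
    show (A - (t : ℂ) • 1).mulVec u = μ • u
    rw [Matrix.sub_mulVec, h1, h2, hμdef, sub_smul]
  -- orthonormal basis extension
  have hcard : Module.finrank ℂ E = Fintype.card (Fin m) := by
    simp [E, finrank_euclideanSpace_fin]
  have hon : Orthonormal ℂ (({0} : Set (Fin m)).restrict (fun _ => u)) :=
    ⟨fun i => hnorm, fun i j hij =>
      absurd (Subtype.ext ((i.2 : (i : Fin m) ∈ ({0} : Set (Fin m)))
        |>.trans (j.2 : (j : Fin m) ∈ ({0} : Set (Fin m))).symm)) hij⟩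
  obtain ⟨b, hb⟩ := hon.exists_orthonormalBasis_extension_of_card_eq hcard
  have hb0 : b 0 = u := hb 0 rfl
  -- the unitary matrix
  set U : Matrix (Fin m) (Fin m) ℂ := Matrix.of (fun i j => b j i) with hUdef
  have hUcol : ∀ i, U i 0 = u i := by intro i; rw [hUdef]; simp [hb0]
  have hU : Uᴴ * U = 1 := by
    ext j k
    rw [Matrix.mul_apply, Matrix.one_apply]
    have := orthonormal_iff_ite.mp b.orthonormal j k
    rw [PiLp.inner_apply] at this
    simpa [Matrix.conjTranspose_apply, hUdef, RCLike.inner_apply, mul_comm] using this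
  have hUU : U * Uᴴ = 1 := mul_eq_one_comm.mp hU
  set M : Matrix (Fin m) (Fin m) ℂ := Uᴴ * A' * U with hM
  -- entry (0,0)
  have hM00 : M 0 0 = μ := by
    have hcol : ∀ i, (A' * U) i 0 = μ * u i := by
      intro i
      have : (A' * U) i 0 = (A'.mulVec fun j => U j 0) i := by
        simp [Matrix.mul_apply, Matrix.mulVec, dotProduct]
      rw [this]
      simp only [funext fun j => hUcol j]
      rw [hueig]
      rfl
    have : M 0 0 = ∑ i, (starRingEnd ℂ) (u i) * (μ * u i) := by
      rw [hM, Matrix.mul_assoc, Matrix.mul_apply]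
      congr 1; ext i
      rw [Matrix.conjTranspose_apply, hUcol i, hcol i]
      rfl
    rw [this]
    have h2 : (inner ℂ u u : ℂ) = ∑ i, (starRingEnd ℂ) (u i) * u i := by
      rw [PiLp.inner_apply]; exact Finset.sum_congr rfl fun i _ => by simp only [RCLike.inner_apply]; ring
    calc ∑ i, (starRingEnd ℂ) (u i) * (μ * u i)
        = μ * ∑ i, (starRingEnd ℂ) (u i) * u i := by rw [Finset.mul_sum]; congr 1; ext i; ring
      _ = μ := by rw [← h2, hinner, mul_one]
  -- trace of M is zero
  have htrA : A.trace = (B.trace : ℂ) := by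
    simp [hA, Matrix.trace, Matrix.diag, Matrix.map_apply]
  have htrM : M.trace = 0 := by
    rw [hM, Matrix.trace_mul_cycle, hUU, Matrix.one_mul]
    rw [hA', Matrix.trace_sub, Matrix.trace_smul, Matrix.trace_one, Fintype.card_fin, htrA, ht]
    push_cast
    simp only [smul_eq_mul]
    have hmC : (m : ℂ) ≠ 0 := by exact_mod_cast hm.ne'
    field_simp
    ring
  -- Frobenius norm invariance
  have hMconj : Mᴴ = Uᴴ * A'ᴴ * U := by
    rw [hM, Matrix.conjTranspose_mul, Matrix.conjTranspose_mul,
      Matrix.conjTranspose_conjTranspose, Matrix.mul_assoc]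
  have htrFrob : (Mᴴ * M).trace = (A'ᴴ * A').trace := by
    rw [hMconj, hM]; exact aux_key U hUU A'ᴴ A'
  -- compute the real Frobenius quantity
  set S : ℝ := ∑ i, ∑ j, ‖M i j‖ ^ 2 with hS
  have hSc : (Mᴴ * M).trace = (S : ℝ) := by
    rw [Matrix.trace]
    have : ∀ i, (Mᴴ * M).diag i = ∑ j, ((‖M j i‖ ^ 2 : ℝ) : ℂ) := by
      intro i
      rw [Matrix.diag_apply, Matrix.mul_apply]
      congr 1; ext j
      rw [Matrix.conjTranspose_apply]
      rw [show star (M j i) * M j i = ((‖M j i‖ ^ 2 : ℝ) : ℂ) by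
        rw [Complex.star_def, ← Complex.normSq_eq_conj_mul_self, Complex.sq_norm]]
    rw [Finset.sum_congr rfl fun i _ => this i, hS]
    push_cast
    rw [Finset.sum_comm]
  -- real matrix C
  set C : Matrix (Fin m) (Fin m) ℝ := B - t • 1 with hC
  have hA'map : A' = C.map Complex.ofReal := by
    rw [hA', hC, hA]
    ext i j
    simp [Matrix.map_apply, Matrix.sub_apply, Matrix.smul_apply, Matrix.one_apply]
    split <;> simp
  have hA'conj : A'ᴴ = Cᵀ.map Complex.ofReal := by
    rw [hA'map]
    ext i j
    simp [Matrix.conjTranspose_apply, Matrix.map_apply, Matrix.transpose_apply]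
  have htrC : (A'ᴴ * A').trace = (((Cᵀ * C).trace : ℝ) : ℂ) := by
    rw [hA'conj, hA'map]
    rw [show (Cᵀ.map Complex.ofReal) * (C.map Complex.ofReal)
        = (Cᵀ * C).map Complex.ofReal by
      ext i j; simp [Matrix.mul_apply, Matrix.map_apply]]
    simp [Matrix.trace, Matrix.diag, Matrix.map_apply]
  have hSval : S = (Cᵀ * C).trace := by
    have : ((S : ℝ) : ℂ) = (((Cᵀ * C).trace : ℝ) : ℂ) := by
      rw [← hSc, htrFrob, htrC]
    exact_mod_cast this
  -- value of tr(CᵀC)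
  have htrCC : (Cᵀ * C).trace = (Bᵀ * B).trace - B.trace ^ 2 / m := by
    rw [hC]
    have hexp : (B - t • 1)ᵀ * (B - t • 1)
        = Bᵀ * B - t • Bᵀ - t • B + (t * t) • 1 := by
      rw [Matrix.transpose_sub, Matrix.transpose_smul, Matrix.transpose_one]
      rw [sub_mul, mul_sub, mul_sub]
      simp only [Matrix.smul_mul, Matrix.mul_smul, Matrix.one_mul, Matrix.mul_one,
        smul_smul]
      abel
    rw [hexp]
    rw [Matrix.trace_add, Matrix.trace_sub, Matrix.trace_sub, Matrix.trace_smul,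
      Matrix.trace_smul, Matrix.trace_smul, Matrix.trace_one, Fintype.card_fin, Matrix.trace_transpose]
    simp only [smul_eq_mul, ht]
    field_simp
    ring
  -- the diagonal inequality
  set d : Fin m → ℝ := fun i => ‖M i i‖ with hd
  have hdiag : ∑ i, d i ^ 2 ≤ S := by
    rw [hS]
    refine Finset.sum_le_sum fun i _ => ?_
    exact Finset.single_le_sum (f := fun j => ‖M i j‖ ^ 2)
      (fun j _ => sq_nonneg _) (Finset.mem_univ i)
  have hsum0 : ∑ i ∈ Finset.univ.erase 0, M i i = -μ := by
    have h0 : ∑ i, M i i = 0 := by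
      have : M.trace = ∑ i, M i i := rfl
      rw [← this, htrM]
    have h1 : M 0 0 + ∑ i ∈ Finset.univ.erase 0, M i i = ∑ i, M i i :=
      Finset.add_sum_erase Finset.univ (fun i => M i i) (Finset.mem_univ 0)
    rw [h0, hM00] at h1
    linear_combination h1
  have habs : ‖μ‖ ≤ ∑ i ∈ Finset.univ.erase 0, d i := by
    calc ‖μ‖ = ‖∑ i ∈ Finset.univ.erase 0, M i i‖ := by
          rw [hsum0, norm_neg]
      _ ≤ ∑ i ∈ Finset.univ.erase 0, d i := by
          simpa [hd] using norm_sum_le (Finset.univ.erase (0 : Fin m)) fun i => M i i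
  have hCS : (∑ i ∈ Finset.univ.erase 0, d i) ^ 2
      ≤ (m - 1 : ℝ) * ∑ i ∈ Finset.univ.erase 0, d i ^ 2 := by
    have := sq_sum_le_card_mul_sum_sq (s := Finset.univ.erase (0 : Fin m)) (f := d)
    have hcard : ((Finset.univ.erase (0 : Fin m)).card : ℝ) = (m : ℝ) - 1 := by
      rw [Finset.card_erase_of_mem (Finset.mem_univ _), Finset.card_univ, Fintype.card_fin]
      rw [Nat.cast_sub hm]; norm_num
    rw [hcard] at this
    exact this
  have herase : ∑ i ∈ Finset.univ.erase 0, d i ^ 2 = (∑ i, d i ^ 2) - d 0 ^ 2 := by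
    rw [eq_sub_iff_add_eq, add_comm]
    exact Finset.add_sum_erase Finset.univ (fun i : Fin m => d i ^ 2) (Finset.mem_univ 0)
  have hd0 : d 0 = ‖μ‖ := by rw [hd]; simp [hM00]
  -- combine: m * |μ|^2 ≤ (m-1) * S
  have hmain : (m : ℝ) * ‖μ‖ ^ 2 ≤ ((m : ℝ) - 1) * S := by
    have h1 : ‖μ‖ ^ 2 ≤ ((m : ℝ) - 1) * (S - ‖μ‖ ^ 2) := by
      calc ‖μ‖ ^ 2 ≤ (∑ i ∈ Finset.univ.erase 0, d i) ^ 2 := by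
            apply sq_le_sq' <;> nlinarith [Finset.sum_nonneg
              (fun i (_ : i ∈ Finset.univ.erase (0:Fin m)) => norm_nonneg (M i i)),
              norm_nonneg μ]
        _ ≤ (m - 1 : ℝ) * ∑ i ∈ Finset.univ.erase 0, d i ^ 2 := hCS
        _ ≤ ((m : ℝ) - 1) * (S - ‖μ‖ ^ 2) := by
            rw [herase, hd0]
            have hm1 : (0 : ℝ) ≤ (m : ℝ) - 1 := by
              have : (1 : ℝ) ≤ m := by exact_mod_cast hm
              linarith
            apply mul_le_mul_of_nonneg_left _ hm1
            linarith [hdiag]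
    nlinarith
  -- finish
  have hgoal : ‖μ‖ ≤ Real.sqrt (((m - 1 : ℝ) / m) * ((Bᵀ * B).trace - B.trace ^ 2 / m)) := by
    have hSnn : 0 ≤ S :=
      Finset.sum_nonneg fun i _ => Finset.sum_nonneg fun j _ => sq_nonneg _
    have hm1 : (0 : ℝ) ≤ ((m : ℝ) - 1) / m := by
      have : (1 : ℝ) ≤ m := by exact_mod_cast hm
      exact div_nonneg (by linarith) (le_of_lt hmR)
    have hrad : 0 ≤ ((m - 1 : ℝ) / m) * ((Bᵀ * B).trace - B.trace ^ 2 / m) := by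
      rw [← htrCC, ← hSval]; exact mul_nonneg hm1 hSnn
    rw [Real.le_sqrt (norm_nonneg _) hrad]
    rw [← htrCC, ← hSval]
    rw [div_mul_eq_mul_div, le_div_iff₀ hmR]
    nlinarith [hmain]
  have : lam - (B.trace : ℂ) / (m : ℂ) = μ := by
    rw [hμdef, ht]
    push_cast
    ring
  rw [this]
  exact hgoal
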